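/- Let H_c be the rational Cherednik algebra at t = 0 attached to the complex reflection group W ⊂ GL(h) and parameter c. Then the image in H_c of every W-invariant polynomial p ∈ Sym(h)^W = ℂ[h*]^W lies in the center of H_c, and likewise the image of every W-invariant polynomial q ∈ Sym(h*)^W = ℂ[h]^W lies in the center of H_c. -/

import Mathlib

noncomputable section

variable {h : Type*} [AddCommGroup h] [Module ℂ h]

/-- The free algebra on generators `h ⊕ h* ⊕ W` used to present the rational
Cherednik algebra at `t = 0`. -/
abbrev CherFree (h : Type*) [AddCommGroup h] [Module ℂ h]
    (W : Subgroup (h ≃ₗ[ℂ] h)) :=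
  FreeAlgebra ℂ (h ⊕ (Module.Dual ℂ h ⊕ ↥W))

/-- The generator of the free algebra corresponding to `v ∈ h`. -/
def genX (W : Subgroup (h ≃ₗ[ℂ] h)) (v : h) : CherFree h W :=
  FreeAlgebra.ι ℂ (Sum.inl v)

/-- The generator of the free algebra corresponding to `f ∈ h*`. -/
def genY (W : Subgroup (h ≃ₗ[ℂ] h)) (f : Module.Dual ℂ h) : CherFree h W :=
  FreeAlgebra.ι ℂ (Sum.inr (Sum.inl f))

/-- The generator of the free algebra corresponding to `w ∈ W`. -/
def genG (W : Subgroup (h ≃ₗ[ℂ] h)) (w : ↥W) : CherFree h W :=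
  FreeAlgebra.ι ℂ (Sum.inr (Sum.inr w))

/-- The defining relations of the rational Cherednik algebra `H_c` at `t = 0`:
linearity of the generators from `h` and `h*`, the group relations of `W`,
commutativity among the `h`-generators and among the `h*`-generators, the
`W`-semidirect product relations, and the principal commutation relation
`x·y − y·x = Σ_{s ∈ S} c_s·(y(α_s)·α_s^∨(x)/α_s^∨(α_s))·s`. -/
inductive CherednikRel (W : Subgroup (h ≃ₗ[ℂ] h)) (S : Finset ↥W)
    (α : ↥W → h) (αv : ↥W → Module.Dual ℂ h) (c : ↥W → ℂ) :
    CherFree h W → CherFree h W → Prop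
  | x_add (v v' : h) :
      CherednikRel W S α αv c (genX W (v + v')) (genX W v + genX W v')
  | x_smul (a : ℂ) (v : h) :
      CherednikRel W S α αv c (genX W (a • v)) (a • genX W v)
  | y_add (f f' : Module.Dual ℂ h) :
      CherednikRel W S α αv c (genY W (f + f')) (genY W f + genY W f')
  | y_smul (a : ℂ) (f : Module.Dual ℂ h) :
      CherednikRel W S α αv c (genY W (a • f)) (a • genY W f)
  | g_mul (w w' : ↥W) :
      CherednikRel W S α αv c (genG W (w * w')) (genG W w * genG W w')
  | g_one :
      CherednikRel W S α αv c (genG W 1) 1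
  | x_comm (v v' : h) :
      CherednikRel W S α αv c (genX W v * genX W v') (genX W v' * genX W v)
  | y_comm (f f' : Module.Dual ℂ h) :
      CherednikRel W S α αv c (genY W f * genY W f') (genY W f' * genY W f)
  | g_x (w : ↥W) (v : h) :
      CherednikRel W S α αv c (genG W w * genX W v)
        (genX W ((w : h ≃ₗ[ℂ] h) v) * genG W w)
  | g_y (w : ↥W) (f : Module.Dual ℂ h) :
      CherednikRel W S α αv c (genG W w * genY W f)
        (genY W (f ∘ₗ ((w : h ≃ₗ[ℂ] h).symm : h →ₗ[ℂ] h)) * genG W w)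
  | main (v : h) (f : Module.Dual ℂ h) :
      CherednikRel W S α αv c (genX W v * genY W f - genY W f * genX W v)
        (∑ s ∈ S, (c s * (f (α s) * αv s v / αv s (α s))) • genG W s)

/-- The rational Cherednik algebra at `t = 0` attached to `W` and the
parameter `c`, presented by generators and relations. -/
abbrev CherednikAlgebra (W : Subgroup (h ≃ₗ[ℂ] h)) (S : Finset ↥W)
    (α : ↥W → h) (αv : ↥W → Module.Dual ℂ h) (c : ↥W → ℂ) :=
  RingQuot (CherednikRel W S α αv c)

/-- The image of `v ∈ h` in the Cherednik algebra. -/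
def elX (W : Subgroup (h ≃ₗ[ℂ] h)) (S : Finset ↥W)
    (α : ↥W → h) (αv : ↥W → Module.Dual ℂ h) (c : ↥W → ℂ) (v : h) :
    CherednikAlgebra W S α αv c :=
  RingQuot.mkAlgHom ℂ (CherednikRel W S α αv c) (genX W v)

/-- The image of `f ∈ h*` in the Cherednik algebra. -/
def elY (W : Subgroup (h ≃ₗ[ℂ] h)) (S : Finset ↥W)
    (α : ↥W → h) (αv : ↥W → Module.Dual ℂ h) (c : ↥W → ℂ) (f : Module.Dual ℂ h) :
    CherednikAlgebra W S α αv c :=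
  RingQuot.mkAlgHom ℂ (CherednikRel W S α αv c) (genY W f)

/-- The image of `w ∈ W` in the Cherednik algebra. -/
def elG (W : Subgroup (h ≃ₗ[ℂ] h)) (S : Finset ↥W)
    (α : ↥W → h) (αv : ↥W → Module.Dual ℂ h) (c : ↥W → ℂ) (w : ↥W) :
    CherednikAlgebra W S α αv c :=
  RingQuot.mkAlgHom ℂ (CherednikRel W S α αv c) (genG W w)

/-- The symmetry relation on the tensor algebra, whose `RingQuot` is the
symmetric algebra `SymmAlg R M`. -/
inductive SymRel (R : Type*) [CommRing R] (M : Type*) [AddCommGroup M] [Module R M] :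
    TensorAlgebra R M → TensorAlgebra R M → Prop
  | comm (x y : M) : SymRel R M (TensorAlgebra.ι R x * TensorAlgebra.ι R y)
      (TensorAlgebra.ι R y * TensorAlgebra.ι R x)

/-- The symmetric algebra `Sym(M)` of a module, realised as the quotient of the
tensor algebra by the symmetry relation. -/
abbrev SymmAlg (R : Type*) [CommRing R] (M : Type*) [AddCommGroup M] [Module R M] :=
  RingQuot (SymRel R M)

/-- The canonical linear map `M → Sym(M)`. -/
def symι (R : Type*) [CommRing R] (M : Type*) [AddCommGroup M] [Module R M] :
    M →ₗ[R] SymmAlg R M :=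
  (RingQuot.mkAlgHom R (SymRel R M)).toLinearMap ∘ₗ TensorAlgebra.ι R

/-- A complex reflection on `h`: an element of `GL(h)` of finite order whose
fixed subspace is a hyperplane (has codimension one). -/
def IsComplexReflection {h : Type*} [AddCommGroup h] [Module ℂ h] (s : h ≃ₗ[ℂ] h) : Prop :=
  IsOfFinOrder s ∧
    Module.finrank ℂ ↥(LinearMap.ker (s.toLinearMap - LinearMap.id)) + 1 =
      Module.finrank ℂ h

/-!
`Φ p` commutes with the image of `h` because `Sym(h)` is commutative, and with `W` because `p` is
invariant. For `y ∈ h*`, the reflection formula `s x = x - (1 - ζ_s) (α_s^∨(x) / α_s^∨(α_s)) α_s`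
turns the defining relation into `[x, y] = Σ_s κ_s ((x - s x) / α_s) s` with
`κ_s = c_s y(α_s) / (1 - ζ_s)`, and the twisted Leibniz rule propagates this to
`[p, y] = Σ_s κ_s ((p - s p) / α_s) s` for all `p ∈ Sym(h)`, the divided differences being taken
in the domain `Sym(h)`. They vanish for invariant `p`. The same argument, for the contragredient
action, applies to `Sym(h*)`.
-/

namespace SymmAlg

variable {R : Type*} [CommRing R] {M : Type*} [AddCommGroup M] [Module R M]

instance : CommRing (SymmAlg R M) where
  mul_comm a b := by
    obtain ⟨a, rfl⟩ := RingQuot.mkAlgHom_surjective R (SymRel R M) a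
    obtain ⟨b, rfl⟩ := RingQuot.mkAlgHom_surjective R (SymRel R M) b
    change Commute _ _
    induction b using TensorAlgebra.induction with
    | algebraMap r => simpa using Algebra.commute_algebraMap_right r _
    | ι x =>
      induction a using TensorAlgebra.induction with
      | algebraMap r => simpa using Algebra.commute_algebraMap_left r _
      | ι y => simpa [commute_iff_eq] using RingQuot.mkAlgHom_rel R (SymRel.comm y x)
      | mul a b ha hb => rw [map_mul]; exact ha.mul_left hb
      | add a b ha hb => rw [map_add]; exact ha.add_left hb
    | mul b c hb hc => rw [map_mul]; exact hb.mul_right hc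
    | add b c hb hc => rw [map_add]; exact hb.add_right hc

theorem isSymmetricAlgebra_symι : IsSymmetricAlgebra (symι R M) := by
  let inv : SymmAlg R M →ₐ[R] SymmetricAlgebra R M :=
    RingQuot.liftAlgHom R ⟨TensorAlgebra.lift R (SymmetricAlgebra.ι R M), by
      rintro _ _ ⟨x, y⟩
      simp [mul_comm]⟩
  refine .of_equiv (.ofAlgHom (SymmetricAlgebra.lift (symι R M)) inv ?_ ?_) ?_
  · ext x
    simp [inv, symι]
  · ext x
    simp [inv, symι]
  · ext x
    simp

instance [NoZeroDivisors R] [Module.Free R M] : NoZeroDivisors (SymmAlg R M) :=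
  isSymmetricAlgebra_symι.equiv.symm.toMulEquiv.noZeroDivisors

theorem symι_ne_zero [Module.Projective R M] {m : M} (hm : m ≠ 0) : symι R M m ≠ 0 := by
  obtain ⟨φ, hφ⟩ := Module.Projective.exists_dual_ne_zero R hm
  intro h
  exact hφ (by simpa using congrArg (isSymmetricAlgebra_symι.lift φ) h)

end SymmAlg

section DividedDifference

variable {K R A ι : Type*} [CommRing K] [CommRing R] [Algebra K R] [Ring A] [Algebra K A]

theorem IsSymmetricAlgebra.semiconjBy_map {M : Type*} [AddCommGroup M] [Module K M]
    {f : M →ₗ[K] R} (hf : IsSymmetricAlgebra f) {Φ : R →ₐ[K] A} {τ : R →ₐ[K] R} {x : A}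
    (h : ∀ m, SemiconjBy x (Φ (f m)) (Φ (τ (f m)))) (p : R) :
    SemiconjBy x (Φ p) (Φ (τ p)) := by
  induction p using hf.induction with
  | algebraMap r =>
    rw [AlgHom.commutes, AlgHom.commutes, AlgHom.commutes]
    exact Algebra.commute_algebraMap_right r x
  | ι m => exact h m
  | mul p q hp hq => simpa using hp.mul_right hq
  | add p q hp hq => simpa using hp.add_right hq

variable (Φ : R →ₐ[K] A) (σ : ι → R →ₐ[K] R) (β : ι → R) (g : ι → A) (S : Finset ι) (a : A)

def HasDivDiffCommutator (p : R) : Prop :=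
  ∃ Q : ι → R, (∀ s ∈ S, p - σ s p = β s * Q s) ∧
    Φ p * a - a * Φ p = ∑ s ∈ S, Φ (Q s) * g s

namespace HasDivDiffCommutator

variable {Φ σ β g S a}

theorem algebraMap (r : K) : HasDivDiffCommutator Φ σ β g S a (algebraMap K R r) :=
  ⟨0, by simp, by simp [Algebra.commutes]⟩

theorem add {p q : R} (hp : HasDivDiffCommutator Φ σ β g S a p)
    (hq : HasDivDiffCommutator Φ σ β g S a q) : HasDivDiffCommutator Φ σ β g S a (p + q) := by
  obtain ⟨P, hPβ, hPa⟩ := hp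
  obtain ⟨Q, hQβ, hQa⟩ := hq
  refine ⟨P + Q, fun s hs => ?_, ?_⟩
  · rw [map_add, add_sub_add_comm, hPβ s hs, hQβ s hs, Pi.add_apply, mul_add]
  · simp only [map_add, Pi.add_apply, add_mul, mul_add, Finset.sum_add_distrib, ← hPa, ← hQa]
    abel

theorem mul (hconj : ∀ s ∈ S, ∀ q, g s * Φ q = Φ (σ s q) * g s) {p q : R}
    (hp : HasDivDiffCommutator Φ σ β g S a p) (hq : HasDivDiffCommutator Φ σ β g S a q) :
    HasDivDiffCommutator Φ σ β g S a (p * q) := by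
  obtain ⟨P, hPβ, hPa⟩ := hp
  obtain ⟨Q, hQβ, hQa⟩ := hq
  refine ⟨fun s => p * Q s + P s * σ s q, fun s hs => ?_, ?_⟩
  · rw [map_mul]
    linear_combination p * hQβ s hs + σ s q * hPβ s hs
  · calc Φ (p * q) * a - a * Φ (p * q)
          = Φ p * (Φ q * a - a * Φ q) + (Φ p * a - a * Φ p) * Φ q := by
            rw [map_mul]; noncomm_ring
      _ = ∑ s ∈ S, (Φ p * Φ (Q s) * g s + Φ (P s) * (g s * Φ q)) := by
            rw [hQa, hPa, Finset.mul_sum, Finset.sum_mul, ← Finset.sum_add_distrib]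
            simp only [mul_assoc]
      _ = ∑ s ∈ S, Φ (p * Q s + P s * σ s q) * g s :=
            Finset.sum_congr rfl fun s hs => by
              rw [hconj s hs q, map_add, map_mul, map_mul, add_mul, mul_assoc (Φ (P s))]

theorem commute [NoZeroDivisors R] (hβ : ∀ s ∈ S, β s ≠ 0) {p : R}
    (hp : HasDivDiffCommutator Φ σ β g S a p) (hinv : ∀ s ∈ S, σ s p = p) :
    Commute (Φ p) a := by
  obtain ⟨Q, hQβ, hQa⟩ := hp
  have hQ : ∀ s ∈ S, Q s = 0 := fun s hs =>
    (mul_eq_zero.mp (by rw [← hQβ s hs, hinv s hs, sub_self])).resolve_left (hβ s hs)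
  rw [commute_iff_eq, ← sub_eq_zero, hQa]
  exact Finset.sum_eq_zero fun s hs => by rw [hQ s hs, map_zero, zero_mul]

end HasDivDiffCommutator

end DividedDifference

section Reflection

variable {K V : Type*} [Field K] [AddCommGroup V] [Module K V]

theorem LinearMap.apply_eq_sub_smul_of_eqOn_ker (T : V →ₗ[K] V) {a : V} {φ : Module.Dual K V}
    {ζ : K} (hfix : ∀ u, φ u = 0 → T u = u) (ha : T a = ζ • a) (hφa : φ a ≠ 0) (v : V) :
    T v = v - ((1 - ζ) * (φ v / φ a)) • a := by
  have hv : T (v - (φ v / φ a) • a) = v - (φ v / φ a) • a :=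
    hfix _ (by rw [map_sub, map_smul, smul_eq_mul, div_mul_cancel₀ _ hφa, sub_self])
  rw [map_sub, map_smul, ha] at hv
  linear_combination (norm := module) hv

theorem LinearEquiv.symm_apply_eq_sub_smul_of_eqOn_ker (T : V ≃ₗ[K] V) {a : V}
    {φ : Module.Dual K V} {ζ : K} (hfix : ∀ u, φ u = 0 → T u = u) (ha : T a = ζ • a)
    (ha0 : a ≠ 0) (hφa : φ a ≠ 0) (v : V) :
    T.symm v = v - ((1 - ζ⁻¹) * (φ v / φ a)) • a := by
  have hζ : ζ ≠ 0 := by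
    rintro rfl
    exact ha0 (T.map_eq_zero_iff.mp (by rw [ha, zero_smul]))
  refine (T.symm : V →ₗ[K] V).apply_eq_sub_smul_of_eqOn_ker
    (fun u hu => T.symm_apply_eq.mpr (hfix u hu).symm) ?_ hφa v
  rw [LinearEquiv.coe_coe, T.symm_apply_eq, map_smul, ha, smul_smul, inv_mul_cancel₀ hζ, one_smul]

end Reflection

/-- The fixed hyperplane of `s` lies in `ker φ` because `η ≠ 1`, so the two hyperplanes agree. -/
theorem IsComplexReflection.apply_eq_self_of_dual_eigen {s : h ≃ₗ[ℂ] h}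
    (hs : IsComplexReflection s) {φ : Module.Dual ℂ h} {η : ℂ}
    (hφ : φ ≠ 0) (hη : η ≠ 1) (heig : ∀ v, φ (s.symm v) = η * φ v) {u : h} (hu : φ u = 0) :
    s u = u := by
  have : FiniteDimensional ℂ h := Module.finite_of_finrank_eq_succ hs.2.symm
  have hdim := hs.2
  set H := LinearMap.ker (s.toLinearMap - LinearMap.id)
  have hmem : ∀ u, u ∈ H ↔ s u = u := fun u => by
    simp [H, sub_eq_zero]
  have hle : H ≤ LinearMap.ker φ := fun u hu => by
    have hsymm : s.symm u = u := s.symm_apply_eq.mpr ((hmem u).mp hu).symm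
    have := heig u
    rw [hsymm] at this
    exact (mul_eq_zero.mp (by linear_combination -this : (η - 1) * φ u = 0)).resolve_left
      (sub_ne_zero.mpr hη)
  have hH : H = LinearMap.ker φ := Submodule.eq_of_le_of_finrank_eq hle <| by
    have := Module.Dual.finrank_ker_add_one_of_ne_zero hφ
    omega
  exact (hmem u).mp (hH ▸ hu)

theorem SymmAlg.commute_map_of_invariant {K V A ι : Type*} [Field K] [AddCommGroup V]
    [Module K V] [Ring A] [Algebra K A] (Φ : SymmAlg K V →ₐ[K] A)
    (σ : ι → SymmAlg K V →ₐ[K] SymmAlg K V) (g : ι → A) (S : Finset ι) (a : A) (β : ι → V)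
    (μ : ι → V → K) (κ : ι → K) (hconj : ∀ s ∈ S, ∀ q, g s * Φ q = Φ (σ s q) * g s)
    (hσ : ∀ s ∈ S, ∀ v, σ s (symι K V v) = symι K V (v - μ s v • β s))
    (hβ : ∀ s ∈ S, β s ≠ 0)
    (hcomm : ∀ v, Φ (symι K V v) * a - a * Φ (symι K V v) = ∑ s ∈ S, (κ s * μ s v) • g s)
    {p : SymmAlg K V} (hp : ∀ s ∈ S, σ s p = p) : Commute (Φ p) a := by
  have hconj' : ∀ s ∈ S, ∀ q, κ s • g s * Φ q = Φ (σ s q) * κ s • g s := fun s hs q => by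
    rw [smul_mul_assoc, hconj s hs q, mul_smul_comm]
  have hdiv (q : SymmAlg K V) :
      HasDivDiffCommutator Φ σ (fun s => symι K V (β s)) (fun s => κ s • g s) S a q := by
    induction q using isSymmetricAlgebra_symι.induction with
    | algebraMap r => exact .algebraMap r
    | ι v =>
      refine ⟨fun s => algebraMap K _ (μ s v), fun s hs => ?_, ?_⟩
      · rw [hσ s hs, map_sub, map_smul, sub_sub_cancel, Algebra.smul_def, mul_comm]
      · rw [hcomm]
        refine Finset.sum_congr rfl fun s _ => ?_
        rw [AlgHom.commutes, ← Algebra.smul_def, smul_smul, mul_comm]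
    | mul p q hp hq => exact hp.mul hconj' hq
    | add p q hp hq => exact hp.add hq
  exact (hdiv p).commute (fun s hs => symι_ne_zero (hβ s hs)) hp

namespace CherednikAlgebra

variable (W : Subgroup (h ≃ₗ[ℂ] h)) (S : Finset ↥W) (α : ↥W → h) (αv : ↥W → Module.Dual ℂ h)
  (c : ↥W → ℂ)

theorem elG_mul_elX (w : ↥W) (v : h) :
    elG W S α αv c w * elX W S α αv c v =
      elX W S α αv c ((w : h ≃ₗ[ℂ] h) v) * elG W S α αv c w := by
  simpa [elX, elG] using
    RingQuot.mkAlgHom_rel ℂ (CherednikRel.g_x (S := S) (α := α) (αv := αv) (c := c) w v)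

theorem elG_mul_elY (w : ↥W) (f : Module.Dual ℂ h) :
    elG W S α αv c w * elY W S α αv c f =
      elY W S α αv c (f ∘ₗ ((w : h ≃ₗ[ℂ] h).symm : h →ₗ[ℂ] h)) * elG W S α αv c w := by
  simpa [elY, elG] using
    RingQuot.mkAlgHom_rel ℂ (CherednikRel.g_y (S := S) (α := α) (αv := αv) (c := c) w f)

theorem elX_mul_elY_sub_elY_mul_elX (v : h) (f : Module.Dual ℂ h) :
    elX W S α αv c v * elY W S α αv c f - elY W S α αv c f * elX W S α αv c v =
      ∑ s ∈ S, (c s * (f (α s) * αv s v / αv s (α s))) • elG W S α αv c s := by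
  simpa [elX, elY, elG] using
    RingQuot.mkAlgHom_rel ℂ (CherednikRel.main (S := S) (α := α) (αv := αv) (c := c) v f)

variable {W S α αv c}

theorem mem_center_of_commute {z : CherednikAlgebra W S α αv c}
    (hX : ∀ v, Commute z (elX W S α αv c v)) (hY : ∀ f, Commute z (elY W S α αv c f))
    (hG : ∀ w, Commute z (elG W S α αv c w)) : z ∈ Subalgebra.center ℂ _ := by
  rw [Subalgebra.mem_center_iff]
  intro b
  obtain ⟨b, rfl⟩ := RingQuot.mkAlgHom_surjective ℂ _ b
  refine (?_ : Commute z _).eq.symm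
  induction b using FreeAlgebra.induction with
  | grade0 r => simpa using Algebra.commute_algebraMap_right r z
  | grade1 x => rcases x with v | f | w; exacts [hX v, hY f, hG w]
  | mul a b ha hb => rw [map_mul]; exact ha.mul_right hb
  | add a b ha hb => rw [map_add]; exact ha.add_right hb

theorem map_mem_center_of_invariant (ζ : ↥W → ℂ) (hζ : ∀ s ∈ S, ζ s ≠ 1)
    (hα : ∀ s ∈ S, α s ≠ 0)
    (hrefl : ∀ s ∈ S, ∀ v, (s : h ≃ₗ[ℂ] h) v = v - ((1 - ζ s) * (αv s v / αv s (α s))) • α s)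
    (Φ : SymmAlg ℂ h →ₐ[ℂ] CherednikAlgebra W S α αv c)
    (hΦ : ∀ x : h, Φ (symι ℂ h x) = elX W S α αv c x)
    (actX : ↥W → (SymmAlg ℂ h →ₐ[ℂ] SymmAlg ℂ h))
    (hactX : ∀ (w : ↥W) (x : h), actX w (symι ℂ h x) = symι ℂ h ((w : h ≃ₗ[ℂ] h) x))
    {p : SymmAlg ℂ h} (hp : ∀ w, actX w p = p) :
    Φ p ∈ Subalgebra.center ℂ (CherednikAlgebra W S α αv c) := by
  have hconj (w : ↥W) (q : SymmAlg ℂ h) :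
      elG W S α αv c w * Φ q = Φ (actX w q) * elG W S α αv c w :=
    SymmAlg.isSymmetricAlgebra_symι.semiconjBy_map
      (fun x => by rw [hΦ, hactX, hΦ]; exact elG_mul_elX W S α αv c w x) q
  refine mem_center_of_commute (fun v => ?_) (fun f => ?_) (fun w => ?_)
  · rw [← hΦ]
    exact (Commute.all p _).map Φ
  · refine SymmAlg.commute_map_of_invariant Φ actX (elG W S α αv c) S _ α
      (fun s v => (1 - ζ s) * (αv s v / αv s (α s))) (fun s => c s * f (α s) / (1 - ζ s))
      (fun s _ => hconj s) (fun s hs v => by rw [hactX, hrefl s hs]) hα (fun v => ?_)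
      (fun s _ => hp s)
    rw [hΦ, elX_mul_elY_sub_elY_mul_elX]
    refine Finset.sum_congr rfl fun s hs => ?_
    have : 1 - ζ s ≠ 0 := sub_ne_zero.mpr (hζ s hs).symm
    congr 1
    field_simp
  · exact (hp w ▸ hconj w p).symm

theorem map_dual_mem_center_of_invariant (θ : ↥W → ℂ) (hθ : ∀ s ∈ S, θ s ≠ 1)
    (hαv : ∀ s ∈ S, αv s ≠ 0)
    (hrefl : ∀ s ∈ S, ∀ v,
      (s : h ≃ₗ[ℂ] h).symm v = v - ((1 - θ s) * (αv s v / αv s (α s))) • α s)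
    (Ψ : SymmAlg ℂ (Module.Dual ℂ h) →ₐ[ℂ] CherednikAlgebra W S α αv c)
    (hΨ : ∀ f : Module.Dual ℂ h, Ψ (symι ℂ (Module.Dual ℂ h) f) = elY W S α αv c f)
    (actY : ↥W → (SymmAlg ℂ (Module.Dual ℂ h) →ₐ[ℂ] SymmAlg ℂ (Module.Dual ℂ h)))
    (hactY : ∀ (w : ↥W) (f : Module.Dual ℂ h),
      actY w (symι ℂ (Module.Dual ℂ h) f) =
        symι ℂ (Module.Dual ℂ h) (f ∘ₗ ((w : h ≃ₗ[ℂ] h).symm : h →ₗ[ℂ] h)))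
    {q : SymmAlg ℂ (Module.Dual ℂ h)} (hq : ∀ w, actY w q = q) :
    Ψ q ∈ Subalgebra.center ℂ (CherednikAlgebra W S α αv c) := by
  have hconj (w : ↥W) (p : SymmAlg ℂ (Module.Dual ℂ h)) :
      elG W S α αv c w * Ψ p = Ψ (actY w p) * elG W S α αv c w :=
    SymmAlg.isSymmetricAlgebra_symι.semiconjBy_map
      (fun f => by rw [hΨ, hactY, hΨ]; exact elG_mul_elY W S α αv c w f) p
  refine mem_center_of_commute (fun v => ?_) (fun f => ?_) (fun w => ?_)
  · refine SymmAlg.commute_map_of_invariant Ψ actY (elG W S α αv c) S _ αv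
      (fun s f => (1 - θ s) * (f (α s) / αv s (α s))) (fun s => -(c s * αv s v) / (1 - θ s))
      (fun s _ => hconj s) (fun s hs f => ?_) hαv (fun f => ?_) (fun s _ => hq s)
    · rw [hactY]
      congr 1
      ext v
      simp only [LinearMap.comp_apply, LinearEquiv.coe_coe, hrefl s hs, map_sub, map_smul,
        LinearMap.sub_apply, LinearMap.smul_apply, smul_eq_mul]
      ring
    · rw [hΨ, ← neg_sub, elX_mul_elY_sub_elY_mul_elX, ← Finset.sum_neg_distrib]
      refine Finset.sum_congr rfl fun s hs => ?_
      have : 1 - θ s ≠ 0 := sub_ne_zero.mpr (hθ s hs).symm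
      rw [← neg_smul (c s * _) (elG W S α αv c s)]
      congr 1
      field_simp
  · rw [← hΨ]
    exact (Commute.all q _).map Ψ
  · exact (hq w ▸ hconj w q).symm

end CherednikAlgebra

theorem invariants_are_central_general
    {h : Type*} [AddCommGroup h] [Module ℂ h]
    -- `W` is a finite subgroup of `GL(h)` generated by the set `S` of
    -- complex reflections it contains:
    (W : Subgroup (h ≃ₗ[ℂ] h))
    (S : Finset ↥W)
    (hS : ∀ s : ↥W, s ∈ S ↔ IsComplexReflection (s : h ≃ₗ[ℂ] h))
    -- eigen-data for the reflections:
    (α : ↥W → h) (ζ : ↥W → ℂ) (αv : ↥W → Module.Dual ℂ h) (η : ↥W → ℂ)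
    (hα : ∀ s ∈ S, α s ≠ 0 ∧ ζ s ≠ 1 ∧ (s : h ≃ₗ[ℂ] h) (α s) = ζ s • α s)
    (hαv : ∀ s ∈ S, αv s ≠ 0 ∧ η s ≠ 1 ∧
      (∀ v : h, αv s ((s : h ≃ₗ[ℂ] h).symm v) = η s * αv s v))
    (hpair : ∀ s ∈ S, αv s (α s) ≠ 0)
    (c : ↥W → ℂ)
    -- `Φ` is the canonical algebra homomorphism `Sym(h) = ℂ[h*] → H_c`:
    (Φ : SymmAlg ℂ h →ₐ[ℂ] CherednikAlgebra W S α αv c)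
    (hΦ : ∀ x : h, Φ (symι ℂ h x) = elX W S α αv c x)
    -- `Ψ` is the canonical algebra homomorphism `Sym(h*) = ℂ[h] → H_c`:
    (Ψ : SymmAlg ℂ (Module.Dual ℂ h) →ₐ[ℂ] CherednikAlgebra W S α αv c)
    (hΨ : ∀ f : Module.Dual ℂ h, Ψ (symι ℂ (Module.Dual ℂ h) f) = elY W S α αv c f)
    -- `actX w` is the algebra automorphism of `Sym(h)` induced by `w ∈ W`:
    (actX : ↥W → (SymmAlg ℂ h →ₐ[ℂ] SymmAlg ℂ h))
    (hactX : ∀ (w : ↥W) (x : h), actX w (symι ℂ h x) = symι ℂ h ((w : h ≃ₗ[ℂ] h) x))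
    -- `actY w` is the algebra automorphism of `Sym(h*)` induced by the
    -- contragredient action `(w·f)(v) = f(w⁻¹ v)` of `w ∈ W` on `h*`:
    (actY : ↥W → (SymmAlg ℂ (Module.Dual ℂ h) →ₐ[ℂ] SymmAlg ℂ (Module.Dual ℂ h)))
    (hactY : ∀ (w : ↥W) (f : Module.Dual ℂ h),
      actY w (symι ℂ (Module.Dual ℂ h) f) =
        symι ℂ (Module.Dual ℂ h) (f ∘ₗ ((w : h ≃ₗ[ℂ] h).symm : h →ₗ[ℂ] h))) :
    (∀ p : SymmAlg ℂ h, (∀ w : ↥W, actX w p = p) →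
      Φ p ∈ Subalgebra.center ℂ (CherednikAlgebra W S α αv c)) ∧
    (∀ q : SymmAlg ℂ (Module.Dual ℂ h), (∀ w : ↥W, actY w q = q) →
      Ψ q ∈ Subalgebra.center ℂ (CherednikAlgebra W S α αv c)) := by
  have hfix : ∀ s ∈ S, ∀ u, αv s u = 0 → (s : h ≃ₗ[ℂ] h) u = u := fun s hs _ hu =>
    ((hS s).mp hs).apply_eq_self_of_dual_eigen (hαv s hs).1 (hαv s hs).2.1 (hαv s hs).2.2 hu
  refine ⟨fun p hp => ?_, fun q hq => ?_⟩
  · refine CherednikAlgebra.map_mem_center_of_invariant ζ (fun s hs => (hα s hs).2.1)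
      (fun s hs => (hα s hs).1) (fun s hs => ?_) Φ hΦ actX hactX hp
    exact (s : h →ₗ[ℂ] h).apply_eq_sub_smul_of_eqOn_ker (hfix s hs) (hα s hs).2.2 (hpair s hs)
  · refine CherednikAlgebra.map_dual_mem_center_of_invariant (fun s => (ζ s)⁻¹)
      (fun s hs => inv_ne_one.mpr (hα s hs).2.1) (fun s hs => (hαv s hs).1)
      (fun s hs => ?_) Ψ hΨ actY hactY hq
    exact (s : h ≃ₗ[ℂ] h).symm_apply_eq_sub_smul_of_eqOn_ker (hfix s hs) (hα s hs).2.2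
      (hα s hs).1 (hpair s hs)

/-- the images in `H_c` of the `W`-invariant polynomials in
`ℂ[h*] = Sym(h)` and in `ℂ[h] = Sym(h*)` are central in `H_c`. -/
theorem invariants_are_central
    {h : Type*} [AddCommGroup h] [Module ℂ h] [FiniteDimensional ℂ h]
    -- `W` is a finite subgroup of `GL(h)` generated by the set `S` of
    -- complex reflections it contains:
    (W : Subgroup (h ≃ₗ[ℂ] h)) [Finite ↥W]
    (S : Finset ↥W)
    (hS : ∀ s : ↥W, s ∈ S ↔ IsComplexReflection (s : h ≃ₗ[ℂ] h))
    (hgen : Subgroup.closure {s : h ≃ₗ[ℂ] h | s ∈ W ∧ IsComplexReflection s} = W)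
    -- eigen-data for the reflections:
    (α : ↥W → h) (ζ : ↥W → ℂ) (αv : ↥W → Module.Dual ℂ h) (η : ↥W → ℂ)
    (hα : ∀ s ∈ S, α s ≠ 0 ∧ ζ s ≠ 1 ∧ (s : h ≃ₗ[ℂ] h) (α s) = ζ s • α s)
    (hαv : ∀ s ∈ S, αv s ≠ 0 ∧ η s ≠ 1 ∧
      (∀ v : h, αv s ((s : h ≃ₗ[ℂ] h).symm v) = η s * αv s v))
    (hpair : ∀ s ∈ S, αv s (α s) ≠ 0)
    -- the parameter `c` is invariant under `W`-conjugation: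
    (c : ↥W → ℂ)
    (hc : ∀ w s : ↥W, s ∈ S → (w * s * w⁻¹ ∈ S ∧ c (w * s * w⁻¹) = c s))
    -- `Φ` is the canonical algebra homomorphism `Sym(h) = ℂ[h*] → H_c`:
    (Φ : SymmAlg ℂ h →ₐ[ℂ] CherednikAlgebra W S α αv c)
    (hΦ : ∀ x : h, Φ (symι ℂ h x) = elX W S α αv c x)
    -- `Ψ` is the canonical algebra homomorphism `Sym(h*) = ℂ[h] → H_c`:
    (Ψ : SymmAlg ℂ (Module.Dual ℂ h) →ₐ[ℂ] CherednikAlgebra W S α αv c)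
    (hΨ : ∀ f : Module.Dual ℂ h, Ψ (symι ℂ (Module.Dual ℂ h) f) = elY W S α αv c f)
    -- `actX w` is the algebra automorphism of `Sym(h)` induced by `w ∈ W`:
    (actX : ↥W → (SymmAlg ℂ h →ₐ[ℂ] SymmAlg ℂ h))
    (hactX : ∀ (w : ↥W) (x : h), actX w (symι ℂ h x) = symι ℂ h ((w : h ≃ₗ[ℂ] h) x))
    -- `actY w` is the algebra automorphism of `Sym(h*)` induced by the
    -- contragredient action `(w·f)(v) = f(w⁻¹ v)` of `w ∈ W` on `h*`:
    (actY : ↥W → (SymmAlg ℂ (Module.Dual ℂ h) →ₐ[ℂ] SymmAlg ℂ (Module.Dual ℂ h)))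
    (hactY : ∀ (w : ↥W) (f : Module.Dual ℂ h),
      actY w (symι ℂ (Module.Dual ℂ h) f) =
        symι ℂ (Module.Dual ℂ h) (f ∘ₗ ((w : h ≃ₗ[ℂ] h).symm : h →ₗ[ℂ] h))) :
    (∀ p : SymmAlg ℂ h, (∀ w : ↥W, actX w p = p) →
      Φ p ∈ Subalgebra.center ℂ (CherednikAlgebra W S α αv c)) ∧
    (∀ q : SymmAlg ℂ (Module.Dual ℂ h), (∀ w : ↥W, actY w q = q) →
      Ψ q ∈ Subalgebra.center ℂ (CherednikAlgebra W S α αv c)) :=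
  invariants_are_central_general W S hS α ζ αv η hα hαv hpair c Φ hΦ Ψ hΨ actX hactX actY hactY
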